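/- arXiv:1707.03145 — 3 statements merged into one kernel-verified Lean document; each statement's English description precedes it below -/
import Mathlib

section
/- Let F^(L), F^(R) : ℝ² → ℝ² be bilinear maps sharing the interface F^(L)(0,v) = F^(R)(0,v) =: F₀(v) for all v, with F₀′(v) ≠ 0 for all v ∈ [0,1]. Define α^(S)(v) = det[D_u F^(S)(0,v), F₀′(v)] for S ∈ {L,R}, β(v) = det[D_u F^(L)(0,v), D_u F^(R)(0,v)], Z(v) = (α^(L)(v))² D_uu F^(R)(0,v) − ( (α^(R)(v))² D_uu F^(L)(0,v) + 2 α^(R)(v) β(v) D_uv F^(L)(0,v) + β(v)² F₀″(v) ), and η(v) = det[F₀′(v), Z(v)]. Then for all v ∈ [0,1], η(v) = 2 (α^(L))′(v) α^(R)(v) β(v). -/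
open Set

/-- The 2×2 determinant `det[x, y] = x₁ y₂ − x₂ y₁` of two vectors in `ℝ²`. -/
noncomputable def det2 (x y : ℝ × ℝ) : ℝ := x.1 * y.2 - x.2 * y.1

/-- `F : ℝ² → ℝ²` is bilinear: each component has the form `a + b·u + c·v + d·u·v`. -/
def IsBilinear (F : ℝ → ℝ → ℝ × ℝ) : Prop :=
  ∃ a b c d : ℝ × ℝ, ∀ u v : ℝ, F u v = a + u • b + v • c + (u * v) • d

/-- `D_u F(0,v)`. -/
noncomputable def DuF (F : ℝ → ℝ → ℝ × ℝ) (v : ℝ) : ℝ × ℝ := deriv (fun u => F u v) 0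

/-- `D_uu F(0,v)`. -/
noncomputable def DuuF (F : ℝ → ℝ → ℝ × ℝ) (v : ℝ) : ℝ × ℝ :=
  deriv (deriv (fun u => F u v)) 0

/-- `D_uv F(0,v)`. -/
noncomputable def DuvF (F : ℝ → ℝ → ℝ × ℝ) (v : ℝ) : ℝ × ℝ := deriv (fun w => DuF F w) v

/-- `F₀′(v)`, the derivative of the interface curve `v ↦ F(0,v)`. -/
noncomputable def F0d (F : ℝ → ℝ → ℝ × ℝ) (v : ℝ) : ℝ × ℝ := deriv (fun w => F 0 w) v

/-- `F₀″(v)`, the second derivative of the interface curve `v ↦ F(0,v)`. -/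
noncomputable def F0dd (F : ℝ → ℝ → ℝ × ℝ) (v : ℝ) : ℝ × ℝ :=
  deriv (deriv (fun w => F 0 w)) v

/-- `α^(S)(v) = det[D_u F^(S)(0,v), F₀′(v)]`, where `G` carries the interface `F₀`. -/
noncomputable def alphaF (F G : ℝ → ℝ → ℝ × ℝ) (v : ℝ) : ℝ := det2 (DuF F v) (F0d G v)

/-- `β(v) = det[D_u F^(L)(0,v), D_u F^(R)(0,v)]`. -/
noncomputable def betaBar (FL FR : ℝ → ℝ → ℝ × ℝ) (v : ℝ) : ℝ :=
  det2 (DuF FL v) (DuF FR v)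

/-- `Z(v) = (α^(L)(v))² D_uu F^(R)(0,v) − ((α^(R)(v))² D_uu F^(L)(0,v)
      + 2 α^(R)(v) β(v) D_uv F^(L)(0,v) + β(v)² F₀″(v))`. -/
noncomputable def Zfun (FL FR : ℝ → ℝ → ℝ × ℝ) (v : ℝ) : ℝ × ℝ :=
  (alphaF FL FL v) ^ 2 • DuuF FR v -
    ((alphaF FR FL v) ^ 2 • DuuF FL v + (2 * alphaF FR FL v * betaBar FL FR v) • DuvF FL v +
      (betaBar FL FR v) ^ 2 • F0dd FL v)

/-!
A bilinear map is affine in each variable separately, so `D_uu F(0,·)` and `F₀″` vanish, `D_uv F(0,·)`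
is the constant coefficient `d` of `u·v`, and `α^(L)` is affine with slope `det[d_L, c_L]`. Hence
`Z = −2 α^(R) β d_L`, and the identity reduces to the antisymmetry of `det`.
-/

lemma det2_comm (x y : ℝ × ℝ) : det2 x y = -det2 y x := by
  unfold det2; ring

lemma det2_smul_right (x y : ℝ × ℝ) (r : ℝ) : det2 x (r • y) = r * det2 x y := by
  simp only [det2, Prod.smul_fst, Prod.smul_snd, smul_eq_mul]; ring

lemma hasDerivAt_const_add_smul {𝕜 E : Type*} [NontriviallyNormedField 𝕜] [NormedAddCommGroup E]
    [NormedSpace 𝕜 E] (k m : E) (x : 𝕜) : HasDerivAt (fun u : 𝕜 => k + u • m) m x := by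
  simpa using ((hasDerivAt_id x).smul_const m).const_add k

lemma deriv_const_add_smul {𝕜 E : Type*} [NontriviallyNormedField 𝕜] [NormedAddCommGroup E]
    [NormedSpace 𝕜 E] (k m : E) : deriv (fun u : 𝕜 => k + u • m) = fun _ => m :=
  funext fun x => (hasDerivAt_const_add_smul k m x).deriv

section Bilinear

variable {F : ℝ → ℝ → ℝ × ℝ} {a b c d : ℝ × ℝ}
  (hF : ∀ u v : ℝ, F u v = a + u • b + v • c + (u * v) • d)
include hF

lemma slice_eq_const_add_smul (v : ℝ) :
    (fun u => F u v) = fun u : ℝ => (a + v • c) + u • (b + v • d) := by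
  funext u
  rw [hF, smul_add, smul_smul]
  abel

lemma interface_eq_const_add_smul : (fun w => F 0 w) = fun w : ℝ => a + w • c := by
  funext w
  simp [hF]

lemma DuF_eq (v : ℝ) : DuF F v = b + v • d := by
  rw [DuF, slice_eq_const_add_smul hF, deriv_const_add_smul]

lemma DuuF_eq_zero (v : ℝ) : DuuF F v = 0 := by
  rw [DuuF, slice_eq_const_add_smul hF, deriv_const_add_smul, deriv_const]

lemma DuvF_eq (v : ℝ) : DuvF F v = d := by
  rw [DuvF, funext (DuF_eq hF), deriv_const_add_smul]

lemma F0d_eq (v : ℝ) : F0d F v = c := by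
  rw [F0d, interface_eq_const_add_smul hF, deriv_const_add_smul]

lemma F0dd_eq_zero (v : ℝ) : F0dd F v = 0 := by
  rw [F0dd, interface_eq_const_add_smul hF, deriv_const_add_smul, deriv_const]

lemma deriv_alphaF_self (v : ℝ) : deriv (fun w => alphaF F F w) v = det2 d c := by
  have h_affine : (fun w => alphaF F F w) = fun w : ℝ => det2 b c + w * det2 d c := by
    funext w
    simp only [alphaF, DuF_eq hF, F0d_eq hF, det2, Prod.fst_add, Prod.snd_add, Prod.smul_fst,
      Prod.smul_snd, smul_eq_mul]
    ring
  rw [h_affine]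
  exact ((hasDerivAt_mul_const (det2 d c)).const_add (det2 b c)).deriv

end Bilinear

lemma Zfun_eq {FL FR : ℝ → ℝ → ℝ × ℝ} {aL bL cL dL aR bR cR dR : ℝ × ℝ}
    (hL : ∀ u v : ℝ, FL u v = aL + u • bL + v • cL + (u * v) • dL)
    (hR : ∀ u v : ℝ, FR u v = aR + u • bR + v • cR + (u * v) • dR) (v : ℝ) :
    Zfun FL FR v = -(2 * alphaF FR FL v * betaBar FL FR v) • dL := by
  rw [Zfun, DuuF_eq_zero hL, DuuF_eq_zero hR, F0dd_eq_zero hL, DuvF_eq hL]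
  simp

theorem stmt1_general (FL FR : ℝ → ℝ → ℝ × ℝ)
    (hFL : IsBilinear FL) (hFR : IsBilinear FR) :
    ∀ v ∈ Icc (0:ℝ) 1,
      det2 (F0d FL v) (Zfun FL FR v) =
        2 * deriv (fun w => alphaF FL FL w) v * alphaF FR FL v * betaBar FL FR v := by
  obtain ⟨aL, bL, cL, dL, hL⟩ := hFL
  obtain ⟨aR, bR, cR, dR, hR⟩ := hFR
  intro v _
  rw [Zfun_eq hL hR, F0d_eq hL, deriv_alphaF_self hL, det2_smul_right, det2_comm cL dL]
  ring

theorem stmt1 (FL FR : ℝ → ℝ → ℝ × ℝ)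
    (hFL : IsBilinear FL) (hFR : IsBilinear FR)
    (hInterface : ∀ v : ℝ, FL 0 v = FR 0 v)
    (hreg : ∀ v ∈ Icc (0:ℝ) 1, F0d FL v ≠ 0) :
    ∀ v ∈ Icc (0:ℝ) 1,
      det2 (F0d FL v) (Zfun FL FR v) =
        2 * deriv (fun w => alphaF FL FL w) v * alphaF FR FL v * betaBar FL FR v :=
  stmt1_general FL FR hFL hFR
end

section
/- Let α^(L), α^(R), β^(L), β^(R) : ℝ → ℝ be polynomial functions of degree at most 1 with α^(S)(v) ≠ 0 for all v ∈ [0,1] and S ∈ {L,R}, and set β = α^(L)β^(R) − α^(R)β^(L), η = 2(α^(L))′α^(R)β, and θ = 2(α^(L)(β^(L))′ − (α^(L))′β^(L))α^(R)β. Let g^(L), g^(R) : [0,1]² → ℝ be twice continuously differentiable. Then the following two sets of conditions are equivalent. (i) For all v ∈ [0,1]: g^(L)(0,v) = g^(R)(0,v); α^(R)(v)·D_u g^(L)(0,v) − α^(L)(v)·D_u g^(R)(0,v) + β(v)·D_v g^(L)(0,v) = 0; and α^(L)(v)·w(v) + η(v)·D_u g^(L)(0,v) + θ(v)·D_v g^(L)(0,v)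 = 0, where w(v) = (α^(L)(v))² D_uu g^(R)(0,v) − ( (α^(R)(v))² D_uu g^(L)(0,v) + 2α^(R)(v)β(v) D_uv g^(L)(0,v) + β(v)² D_vv g^(L)(0,v) ). (ii) For all v ∈ [0,1]: g^(L)(0,v) = g^(R)(0,v) (call the common value g₀(v)); ( D_u g^(L)(0,v) − β^(L)(v) g₀′(v) ) / α^(L)(v) = ( D_u g^(R)(0,v) − β^(R)(v) g₀′(v) ) / α^(R)(v) (call the common value g₁(v)); and ( D_uu g^(L)(0,v) − (β^(L)(v))² g₀″(v) − 2α^(L)(v)β^(L)(v) g₁′(v) ) / (α^(L)(v))² = ( D_uu g^(R)(0,v) − (β^(R)(v))² g₀″(v) − 2α^(R)(v)β^(R)(v) g₁′(v) ) / (α^(R)(v))². -/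
open Set

/-- `D_u g(0,v)`: one-sided partial derivative w.r.t. the first variable at `(0,v)`,
taken within `[0,1]`. -/
noncomputable def DuW (g : ℝ → ℝ → ℝ) (v : ℝ) : ℝ :=
  derivWithin (fun u => g u v) (Set.Icc 0 1) 0

/-- `D_v g(0,v)`. -/
noncomputable def DvW (g : ℝ → ℝ → ℝ) (v : ℝ) : ℝ :=
  derivWithin (fun w => g 0 w) (Set.Icc 0 1) v

/-- `D_uu g(0,v)`. -/
noncomputable def DuuW (g : ℝ → ℝ → ℝ) (v : ℝ) : ℝ :=
  derivWithin (fun u => derivWithin (fun t => g t v) (Set.Icc 0 1) u) (Set.Icc 0 1) 0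

/-- `D_uv g(0,v)`. -/
noncomputable def DuvW (g : ℝ → ℝ → ℝ) (v : ℝ) : ℝ :=
  derivWithin (fun w => derivWithin (fun t => g t w) (Set.Icc 0 1) 0) (Set.Icc 0 1) v

/-- `D_vv g(0,v)`. -/
noncomputable def DvvW (g : ℝ → ℝ → ℝ) (v : ℝ) : ℝ :=
  derivWithin (derivWithin (fun w => g 0 w) (Set.Icc 0 1)) (Set.Icc 0 1) v

/-- The trace `g₀(v) = g^(L)(0,v)`. -/
noncomputable def gTrace (g : ℝ → ℝ → ℝ) : ℝ → ℝ := fun v => g 0 v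

/-- The function `g₁(v) = (D_u g^(L)(0,v) − β^(L)(v) g₀′(v)) / α^(L)(v)`. -/
noncomputable def gOne (g : ℝ → ℝ → ℝ) (αL βL : ℝ → ℝ) : ℝ → ℝ := fun v =>
  (DuW g v - βL v * derivWithin (gTrace g) (Set.Icc 0 1) v) / αL v

/-!
Condition (i) is condition (ii) with the denominators cleared. The one analytic input is the
quotient rule for `g₁ = (D_u g^(L)(0,·) − β^(L) g₀′) / α^(L)`: as `g^(L)` is `C²` up to the boundary,
both `D_u g^(L)(0,·)` and `g₀′` are differentiable on `[0,1]`, so `(α^(L))² g₁′` is an explicit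
combination of `D_uv g^(L)`, `D_vv g^(L)` and the derivatives of `α^(L)`, `β^(L)`. After this
substitution the second-order condition of (i) is that of (ii) multiplied by `α^(L) (α^(L) α^(R))²`.
-/

theorem differentiable_of_affine {f : ℝ → ℝ} (hf : ∃ a b : ℝ, ∀ v, f v = a + b * v) :
    Differentiable ℝ f := by
  obtain ⟨a, b, hf⟩ := hf
  rw [funext hf]
  fun_prop

section TwoVariable

variable {g : ℝ → ℝ → ℝ}

theorem DuW_eq_fderivWithin
    (hg : DifferentiableOn ℝ (fun q : ℝ × ℝ => g q.1 q.2) (Icc 0 1 ×ˢ Icc 0 1))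
    {v : ℝ} (hv : v ∈ Icc (0 : ℝ) 1) :
    DuW g v = fderivWithin ℝ (fun q : ℝ × ℝ => g q.1 q.2) (Icc 0 1 ×ˢ Icc 0 1) (0, v) (1, 0) := by
  have h0 : (0 : ℝ) ∈ Icc (0 : ℝ) 1 := left_mem_Icc.2 zero_le_one
  have hline : HasDerivWithinAt (fun u : ℝ => (u, v)) ((1 : ℝ), (0 : ℝ)) (Icc 0 1) 0 :=
    ((hasDerivAt_id (0 : ℝ)).prodMk (hasDerivAt_const (0 : ℝ) v)).hasDerivWithinAt
  have hcomp := (hg _ ⟨h0, hv⟩).hasFDerivWithinAt.comp_hasDerivWithinAt (0 : ℝ) hline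
    (fun u hu => ⟨hu, hv⟩)
  exact hcomp.derivWithin (uniqueDiffOn_Icc one_pos 0 h0)

theorem hasDerivWithinAt_DuW
    (hg : ContDiffOn ℝ 2 (fun q : ℝ × ℝ => g q.1 q.2) (Icc 0 1 ×ˢ Icc 0 1))
    {v : ℝ} (hv : v ∈ Icc (0 : ℝ) 1) :
    HasDerivWithinAt (DuW g) (DuvW g v) (Icc 0 1) v := by
  have hI := uniqueDiffOn_Icc one_pos
  have h0 : (0 : ℝ) ∈ Icc (0 : ℝ) 1 := left_mem_Icc.2 zero_le_one
  have hD : ContDiffOn ℝ 1 (fderivWithin ℝ (fun q : ℝ × ℝ => g q.1 q.2) (Icc 0 1 ×ˢ Icc 0 1))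
      (Icc 0 1 ×ˢ Icc 0 1) := hg.fderivWithin (hI.prod hI) (by norm_num)
  have hline : DifferentiableWithinAt ℝ (fun w : ℝ => ((0 : ℝ), w)) (Icc 0 1) v := by fun_prop
  have hdiff : DifferentiableWithinAt ℝ
      (fun w => fderivWithin ℝ (fun q : ℝ × ℝ => g q.1 q.2) (Icc 0 1 ×ˢ Icc 0 1) (0, w) (1, 0))
      (Icc 0 1) v :=
    (((hD.differentiableOn one_ne_zero) _ ⟨h0, hv⟩).comp v hline
      (fun w hw => ⟨h0, hw⟩)).clm_apply (differentiableWithinAt_const _)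
  have hDuW := fun w (hw : w ∈ Icc (0 : ℝ) 1) =>
    DuW_eq_fderivWithin (hg.differentiableOn two_ne_zero) hw
  exact (hdiff.congr hDuW (hDuW v hv)).hasDerivWithinAt

theorem hasDerivWithinAt_derivWithin_gTrace
    (hg : ContDiffOn ℝ 2 (fun q : ℝ × ℝ => g q.1 q.2) (Icc 0 1 ×ˢ Icc 0 1))
    {v : ℝ} (hv : v ∈ Icc (0 : ℝ) 1) :
    HasDerivWithinAt (derivWithin (gTrace g) (Icc 0 1)) (DvvW g v) (Icc 0 1) v := by
  have h0 : (0 : ℝ) ∈ Icc (0 : ℝ) 1 := left_mem_Icc.2 zero_le_one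
  have htrace : ContDiffOn ℝ 2 (gTrace g) (Icc 0 1) :=
    hg.comp (g := fun q : ℝ × ℝ => g q.1 q.2) (f := fun w : ℝ => ((0 : ℝ), w))
      (by fun_prop) (fun w hw => ⟨h0, hw⟩)
  exact (((htrace.derivWithin (uniqueDiffOn_Icc one_pos) (by norm_num)).differentiableOn
    one_ne_zero) v hv).hasDerivWithinAt

theorem sq_mul_derivWithin_gOne {αL βL : ℝ → ℝ}
    (hg : ContDiffOn ℝ 2 (fun q : ℝ × ℝ => g q.1 q.2) (Icc 0 1 ×ˢ Icc 0 1))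
    {v : ℝ} (hv : v ∈ Icc (0 : ℝ) 1)
    (hαL : DifferentiableAt ℝ αL v) (hβL : DifferentiableAt ℝ βL v) (hαLv : αL v ≠ 0) :
    αL v ^ 2 * derivWithin (gOne g αL βL) (Icc 0 1) v =
      (DuvW g v - (deriv βL v * DvW g v + βL v * DvvW g v)) * αL v -
        (DuW g v - βL v * DvW g v) * deriv αL v := by
  have hquot := ((hasDerivWithinAt_DuW hg hv).sub
    (hβL.hasDerivAt.hasDerivWithinAt.mul (hasDerivWithinAt_derivWithin_gTrace hg hv))).div
    hαL.hasDerivAt.hasDerivWithinAt hαLv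
  have hderiv : derivWithin (gOne g αL βL) (Icc 0 1) v = _ :=
    hquot.derivWithin (uniqueDiffOn_Icc one_pos v hv)
  rw [hderiv, mul_div_cancel₀ _ (pow_ne_zero 2 hαLv)]
  rfl

end TwoVariable

section Matching

variable {aL aR bL bR daL dbL uL uR d1 d2 uuL uuR uvL dg1 : ℝ}

theorem first_order_matching_iff (haL : aL ≠ 0) (haR : aR ≠ 0) :
    aR * uL - aL * uR + (aL * bR - aR * bL) * d1 = 0 ↔
      (uL - bL * d1) / aL = (uR - bR * d1) / aR := by
  rw [div_eq_div_iff haL haR]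
  constructor <;> intro h <;> linear_combination h

theorem second_order_matching_iff (haL : aL ≠ 0) (haR : aR ≠ 0)
    (hdg1 : aL ^ 2 * dg1 = (uvL - (dbL * d1 + bL * d2)) * aL - (uL - bL * d1) * daL) :
    aL * (aL ^ 2 * uuR - (aR ^ 2 * uuL + 2 * aR * (aL * bR - aR * bL) * uvL +
        (aL * bR - aR * bL) ^ 2 * d2)) + (2 * daL * aR * (aL * bR - aR * bL)) * uL +
        (2 * (aL * dbL - daL * bL) * aR * (aL * bR - aR * bL)) * d1 = 0 ↔
      (uuL - bL ^ 2 * d2 - 2 * aL * bL * dg1) / aL ^ 2 =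
        (uuR - bR ^ 2 * d2 - 2 * aR * bR * dg1) / aR ^ 2 := by
  rw [div_eq_div_iff (pow_ne_zero 2 haL) (pow_ne_zero 2 haR)]
  constructor <;> intro h
  · refine mul_left_cancel₀ haL ?_
    linear_combination -h + 2 * aR * (aL * bR - aR * bL) * hdg1
  · linear_combination -aL * h + 2 * aR * (aL * bR - aR * bL) * hdg1

end Matching

theorem stmt3_general (αL αR βL βR : ℝ → ℝ)
    (hαL : ∃ a b : ℝ, ∀ v, αL v = a + b * v)
    (hβL : ∃ a b : ℝ, ∀ v, βL v = a + b * v)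
    (hαLne : ∀ v ∈ Icc (0:ℝ) 1, αL v ≠ 0)
    (hαRne : ∀ v ∈ Icc (0:ℝ) 1, αR v ≠ 0)
    (gL gR : ℝ → ℝ → ℝ)
    (hgL : ContDiffOn ℝ 2 (fun q : ℝ × ℝ => gL q.1 q.2) (Icc 0 1 ×ˢ Icc 0 1)) :
    -- (i)
    (∀ v ∈ Icc (0:ℝ) 1,
      gL 0 v = gR 0 v ∧
      αR v * DuW gL v - αL v * DuW gR v + (αL v * βR v - αR v * βL v) * DvW gL v = 0 ∧
      αL v * ((αL v) ^ 2 * DuuW gR v -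
          ((αR v) ^ 2 * DuuW gL v +
            2 * αR v * (αL v * βR v - αR v * βL v) * DuvW gL v +
            (αL v * βR v - αR v * βL v) ^ 2 * DvvW gL v)) +
        (2 * deriv αL v * αR v * (αL v * βR v - αR v * βL v)) * DuW gL v +
        (2 * (αL v * deriv βL v - deriv αL v * βL v) * αR v *
          (αL v * βR v - αR v * βL v)) * DvW gL v = 0)
    ↔
    -- (ii)
    (∀ v ∈ Icc (0:ℝ) 1,
      gL 0 v = gR 0 v ∧
      (DuW gL v - βL v * derivWithin (gTrace gL) (Set.Icc 0 1) v) / αL v =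
        (DuW gR v - βR v * derivWithin (gTrace gL) (Set.Icc 0 1) v) / αR v ∧
      (DuuW gL v -
          (βL v) ^ 2 * derivWithin (derivWithin (gTrace gL) (Set.Icc 0 1)) (Set.Icc 0 1) v -
          2 * αL v * βL v * derivWithin (gOne gL αL βL) (Set.Icc 0 1) v) / (αL v) ^ 2 =
        (DuuW gR v -
          (βR v) ^ 2 * derivWithin (derivWithin (gTrace gL) (Set.Icc 0 1)) (Set.Icc 0 1) v -
          2 * αR v * βR v * derivWithin (gOne gL αL βL) (Set.Icc 0 1) v) / (αR v) ^ 2) := by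
  refine forall₂_congr fun v hv => and_congr Iff.rfl (and_congr
    (first_order_matching_iff (hαLne v hv) (hαRne v hv))
    (second_order_matching_iff (hαLne v hv) (hαRne v hv) ?_))
  exact sq_mul_derivWithin_gOne hgL hv (differentiable_of_affine hαL v)
    (differentiable_of_affine hβL v) (hαLne v hv)

theorem stmt3 (αL αR βL βR : ℝ → ℝ)
    (hαL : ∃ a b : ℝ, ∀ v, αL v = a + b * v)
    (hαR : ∃ a b : ℝ, ∀ v, αR v = a + b * v)
    (hβL : ∃ a b : ℝ, ∀ v, βL v = a + b * v)
    (hβR : ∃ a b : ℝ, ∀ v, βR v = a + b * v)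
    (hαLne : ∀ v ∈ Icc (0:ℝ) 1, αL v ≠ 0)
    (hαRne : ∀ v ∈ Icc (0:ℝ) 1, αR v ≠ 0)
    (gL gR : ℝ → ℝ → ℝ)
    (hgL : ContDiffOn ℝ 2 (fun q : ℝ × ℝ => gL q.1 q.2) (Icc 0 1 ×ˢ Icc 0 1))
    (hgR : ContDiffOn ℝ 2 (fun q : ℝ × ℝ => gR q.1 q.2) (Icc 0 1 ×ˢ Icc 0 1)) :
    -- (i)
    (∀ v ∈ Icc (0:ℝ) 1,
      gL 0 v = gR 0 v ∧
      αR v * DuW gL v - αL v * DuW gR v + (αL v * βR v - αR v * βL v) * DvW gL v = 0 ∧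
      αL v * ((αL v) ^ 2 * DuuW gR v -
          ((αR v) ^ 2 * DuuW gL v +
            2 * αR v * (αL v * βR v - αR v * βL v) * DuvW gL v +
            (αL v * βR v - αR v * βL v) ^ 2 * DvvW gL v)) +
        (2 * deriv αL v * αR v * (αL v * βR v - αR v * βL v)) * DuW gL v +
        (2 * (αL v * deriv βL v - deriv αL v * βL v) * αR v *
          (αL v * βR v - αR v * βL v)) * DvW gL v = 0)
    ↔
    -- (ii)
    (∀ v ∈ Icc (0:ℝ) 1,
      gL 0 v = gR 0 v ∧
      (DuW gL v - βL v * derivWithin (gTrace gL) (Set.Icc 0 1) v) / αL v =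
        (DuW gR v - βR v * derivWithin (gTrace gL) (Set.Icc 0 1) v) / αR v ∧
      (DuuW gL v -
          (βL v) ^ 2 * derivWithin (derivWithin (gTrace gL) (Set.Icc 0 1)) (Set.Icc 0 1) v -
          2 * αL v * βL v * derivWithin (gOne gL αL βL) (Set.Icc 0 1) v) / (αL v) ^ 2 =
        (DuuW gR v -
          (βR v) ^ 2 * derivWithin (derivWithin (gTrace gL) (Set.Icc 0 1)) (Set.Icc 0 1) v -
          2 * αR v * βR v * derivWithin (gOne gL αL βL) (Set.Icc 0 1) v) / (αR v) ^ 2) :=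
  stmt3_general αL αR βL βR hαL hβL hαLne hαRne gL gR hgL
end

section
/- Let p ≥ 5 and 2 ≤ r ≤ p−3 be integers, k ∈ ℕ₀, and 0 = τ₀ < τ₁ < ⋯ < τ_k < τ_{k+1} = 1. Let α̃^(L), α̃^(R) be coprime real polynomial functions of degree at most 1, each nonvanishing on [0,1], and let d_α̃ = max(deg α̃^(L), deg α̃^(R)). Then the set Γ₂ = { g : [0,1] → ℝ | (α̃^(L))²·g ∈ S(p,r) and (α̃^(R))²·g ∈ S(p,r) } equals the spline space S(p − 2d_α̃, r), and its dimension is k(p − 2d_α̃ − r) + p + 1 − 2d_α̃. -/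
/-!
On the `i`-th knot interval let `A_i`, `B_i` be the pieces of `α_L² g` and `α_R² g`. Both
`α_R² A_i` and `α_L² B_i` agree with `α_L² α_R² g` there, so they are equal, and coprimality gives
`A_i = α_L² Q_i`, `B_i = α_R² Q_i`. By Taylor's formula the `C^r` condition at a knot `τ` says that
the jump of the pieces is divisible by `(X - τ)^(r+1)`; since `α_L(τ) ≠ 0` this passes from the
`A_i` to the `Q_i`. Hence `Γ₂ = S(p - 2 d_α̃, r)`, the inclusion `⊇` being clear.

For the dimension, `S(d, s)` is the image, under an injective gluing map, of the kernel of the map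
sending a tuple of `k + 1` pieces of degree `≤ d` to the jets of order `s_i` of its jumps at the
knots. This map is onto (jets of order `n` are attained by polynomials of degree `≤ n`), so
rank–nullity gives `dim S(d, s) = (k + 1)(d + 1) - ∑ (s_i + 1)`.
-/

open Set Polynomial

noncomputable section

/-- `f : ℝ → ℝ` restricted to `[0,1]` is a spline of degree at most `d` for the knots
`0 = τ 0 < τ 1 < ⋯ < τ k < τ (k+1) = 1`, with smoothness of order `s i` at the interior
knot `τ i` (`1 ≤ i ≤ k`): on each knot interval `f` coincides with a polynomial of degree
at most `d`, and the one-sided derivatives of orders `0, …, s i` (computed from the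
polynomial pieces) agree at each interior knot `τ i`. -/
def IsSplineOn (k : ℕ) (τ : ℕ → ℝ) (d : ℕ) (s : ℕ → ℕ) (f : ℝ → ℝ) : Prop :=
  ∃ P : ℕ → Polynomial ℝ,
    (∀ i ≤ k, (P i).natDegree ≤ d) ∧
    (∀ i ≤ k, ∀ x ∈ Set.Icc (τ i) (τ (i+1)), f x = (P i).eval x) ∧
    (∀ i, 1 ≤ i → i ≤ k → ∀ j ≤ s i,
      ((fun Q : Polynomial ℝ => Polynomial.derivative Q)^[j] (P (i-1))).eval (τ i) =
        ((fun Q : Polynomial ℝ => Polynomial.derivative Q)^[j] (P i)).eval (τ i))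

/-- The spline space `S(d, s)` on `[0,1]`, as a set of functions `[0,1] → ℝ`:
restrictions to `[0,1]` of the functions described by `IsSplineOn`. -/
def SplineSpace (k : ℕ) (τ : ℕ → ℝ) (d : ℕ) (s : ℕ → ℕ) :
    Set (Set.Icc (0:ℝ) 1 → ℝ) :=
  {g | ∃ f : ℝ → ℝ, IsSplineOn k τ d s f ∧ ∀ x : Set.Icc (0:ℝ) 1, g x = f x.1}

namespace Polynomial

theorem mem_degreeLT_add_one_iff {R : Type*} [Semiring R] {p : R[X]} {n : ℕ} :
    p ∈ degreeLT R (n + 1) ↔ p.natDegree ≤ n := by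
  rw [degreeLT_succ_eq_degreeLE, mem_degreeLE, natDegree_le_iff_degree_le]

theorem natDegree_le_sub_of_natDegree_mul_le {R : Type*} [Semiring R] [NoZeroDivisors R]
    {a p : R[X]} {e : ℕ} (ha : a ≠ 0) (h : (a * p).natDegree ≤ e) :
    p.natDegree ≤ e - a.natDegree := by
  rcases eq_or_ne p 0 with rfl | hp
  · simp
  · rw [natDegree_mul ha hp] at h
    omega

variable {K : Type*} [Field K] {p q : K[X]} {t : K} {n : ℕ}

theorem X_sub_C_pow_dvd_iff_iterate_derivative_eval_eq_zero [CharZero K] :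
    (X - C t) ^ (n + 1) ∣ p ↔ ∀ j ≤ n, (derivative^[j] p).eval t = 0 := by
  rcases eq_or_ne p 0 with rfl | hp
  · simp
  · rw [← le_rootMultiplicity_iff hp, Nat.add_one_le_iff,
      lt_rootMultiplicity_iff_isRoot_iterate_derivative hp]
    rfl

theorem X_sub_C_pow_dvd_sub_iff [CharZero K] :
    (X - C t) ^ (n + 1) ∣ p - q ↔
      ∀ j ≤ n, (derivative^[j] p).eval t = (derivative^[j] q).eval t := by
  simp only [X_sub_C_pow_dvd_iff_iterate_derivative_eval_eq_zero, iterate_derivative_sub,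
    eval_sub, sub_eq_zero]

theorem isCoprime_X_sub_C_pow_of_eval_ne_zero (hp : p.eval t ≠ 0) (m : ℕ) :
    IsCoprime ((X - C t) ^ m) p :=
  ((irreducible_X_sub_C t).coprime_iff_not_dvd.2 (by rwa [dvd_iff_isRoot])).pow_left

variable (t n) in
def jet : K[X] →ₗ[K] Fin (n + 1) → K :=
  LinearMap.pi fun j => leval t ∘ₗ derivative ^ (j : ℕ)

theorem jet_apply (j : Fin (n + 1)) : jet t n p j = (derivative^[j] p).eval t := by
  simp [jet, Module.End.pow_apply]

theorem jet_eq_zero_iff [CharZero K] : jet t n p = 0 ↔ (X - C t) ^ (n + 1) ∣ p := by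
  simp [funext_iff, jet_apply, X_sub_C_pow_dvd_iff_iterate_derivative_eval_eq_zero,
    Fin.forall_iff]

theorem exists_mem_degreeLT_jet_eq [CharZero K] (c : Fin (n + 1) → K) :
    ∃ p ∈ degreeLT K (n + 1), jet t n p = c := by
  have hinj : Function.Injective (jet t n ∘ₗ (degreeLT K (n + 1)).subtype) := by
    rw [← LinearMap.ker_eq_bot, LinearMap.ker_eq_bot']
    intro p hp
    refine Subtype.ext (eq_zero_of_dvd_of_degree_lt (jet_eq_zero_iff.1 hp) ?_)
    rw [degree_pow, degree_X_sub_C, nsmul_one]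
    exact mem_degreeLT.1 p.2
  obtain ⟨p, hp⟩ := (LinearMap.injective_iff_surjective_of_finrank_eq_finrank
    (by simp [Module.finrank_eq_card_basis (degreeLT.basis K (n + 1))])).1 hinj c
  exact ⟨p, p.2, hp⟩

end Polynomial

section Knots

variable {k : ℕ} {τ : ℕ → ℝ} {x : ℝ}

def knotIndex (k : ℕ) (τ : ℕ → ℝ) (x : ℝ) : Fin (k + 1) :=
  ⟨Nat.findGreatest (fun i => τ i ≤ x) k, Nat.lt_succ_of_le (Nat.findGreatest_le k)⟩

theorem knot_strictMonoOn (hτ : ∀ i ≤ k, τ i < τ (i + 1)) : StrictMonoOn τ (Iic (k + 1)) :=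
  strictMonoOn_Iic_of_lt_succ fun m hm => by simpa using hτ m (by omega)

theorem knot_mem_Icc (hτ0 : τ 0 = 0) (hτ1 : τ (k + 1) = 1) (hτ : ∀ i ≤ k, τ i < τ (i + 1))
    {i : ℕ} (hi : i ≤ k + 1) : τ i ∈ Icc (0 : ℝ) 1 := by
  have hmono := (knot_strictMonoOn hτ).monotoneOn
  constructor
  · rw [← hτ0]; exact hmono (by simp) hi (Nat.zero_le i)
  · rw [← hτ1]; exact hmono hi (by simp) hi

theorem Icc_knot_subset (hτ0 : τ 0 = 0) (hτ1 : τ (k + 1) = 1) (hτ : ∀ i ≤ k, τ i < τ (i + 1))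
    (i : Fin (k + 1)) : Icc (τ i) (τ (i + 1)) ⊆ Icc (0 : ℝ) 1 :=
  Icc_subset_Icc (knot_mem_Icc hτ0 hτ1 hτ (by omega)).1
    (knot_mem_Icc hτ0 hτ1 hτ (by omega)).2

theorem knot_knotIndex_le {i : Fin (k + 1)} (hx : τ i ≤ x) : τ (knotIndex k τ x) ≤ x :=
  Nat.findGreatest_spec (P := fun i => τ i ≤ x) (Nat.lt_succ_iff.1 i.2) hx

theorem le_knotIndex {i : Fin (k + 1)} (hx : τ i ≤ x) : i ≤ knotIndex k τ x :=
  Nat.le_findGreatest (Nat.lt_succ_iff.1 i.2) hx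

theorem mem_Icc_knotIndex (hτ0 : τ 0 = 0) (hτ1 : τ (k + 1) = 1) (hx : x ∈ Icc (0 : ℝ) 1) :
    x ∈ Icc (τ (knotIndex k τ x)) (τ (knotIndex k τ x + 1)) := by
  refine ⟨knot_knotIndex_le (i := 0) (hτ0 ▸ hx.1), ?_⟩
  rcases (Nat.lt_succ_iff.1 (knotIndex k τ x).2).eq_or_lt with h | h
  · rw [h, hτ1]; exact hx.2
  · exact (not_le.1 (Nat.findGreatest_is_greatest (P := fun i => τ i ≤ x)
      (Nat.lt_succ_self _) h)).le

theorem knotIndex_eq_of_mem_Ioo (hτ : ∀ i ≤ k, τ i < τ (i + 1)) {i : Fin (k + 1)}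
    (hx : x ∈ Ioo (τ i) (τ (i + 1))) : knotIndex k τ x = i := by
  have hle := le_knotIndex hx.1.le
  by_contra hne
  have : τ (i + 1) ≤ τ (knotIndex k τ x) :=
    (knot_strictMonoOn hτ).monotoneOn (by simp; omega) (by simp)
      (Fin.lt_def.1 (lt_of_le_of_ne hle (Ne.symm hne)))
  linarith [hx.2, knot_knotIndex_le hx.1.le]

theorem eval_knotIndex (hτ : ∀ i ≤ k, τ i < τ (i + 1)) {P : Fin (k + 1) → ℝ[X]}
    (hP : ∀ i : Fin k, (P i.castSucc).eval (τ (i + 1)) = (P i.succ).eval (τ (i + 1)))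
    {i : Fin (k + 1)} (hx : x ∈ Icc (τ i) (τ (i + 1))) :
    (P (knotIndex k τ x)).eval x = (P i).eval x := by
  set m := knotIndex k τ x
  rcases (le_knotIndex hx.1 : i ≤ m).eq_or_lt with h | h
  · rw [h]
  have hmono := (knot_strictMonoOn hτ).monotoneOn
  have hm : τ m ≤ x := knot_knotIndex_le hx.1
  have him : (i : ℕ) + 1 ≤ m := Fin.lt_def.1 h
  have hmi : (m : ℕ) = i + 1 := by
    by_contra hne
    have := (knot_strictMonoOn hτ) (by simp; omega) (by simp) (show (i : ℕ) + 1 < m by omega)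
    linarith [hx.2]
  have hxi : x = τ (i + 1) :=
    le_antisymm hx.2 ((hmono (by simp; omega) (by simp) him).trans hm)
  let j : Fin k := ⟨i, by omega⟩
  have hj : j.castSucc = i ∧ j.succ = m := ⟨rfl, Fin.ext hmi.symm⟩
  rw [← hj.1, ← hj.2, hxi]
  exact (hP j).symm

end Knots

section Pieces

variable {k : ℕ} {τ : ℕ → ℝ} {d : ℕ} {s : ℕ → ℕ} {P : Fin (k + 1) → ℝ[X]}

/-- By Taylor's formula, the derivatives of orders `≤ s` of two pieces agree at a knot `τ` iff
their difference is divisible by `(X - τ) ^ (s + 1)`. -/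
def IsSplinePieces (k : ℕ) (τ : ℕ → ℝ) (d : ℕ) (s : ℕ → ℕ) (P : Fin (k + 1) → ℝ[X]) : Prop :=
  (∀ i, (P i).natDegree ≤ d) ∧
    ∀ i : Fin k, (X - C (τ (i + 1))) ^ (s (i + 1) + 1) ∣ P i.castSucc - P i.succ

theorem IsSplinePieces.eval_castSucc_eq (h : IsSplinePieces k τ d s P) (i : Fin k) :
    (P i.castSucc).eval (τ (i + 1)) = (P i.succ).eval (τ (i + 1)) := by
  have := dvd_iff_isRoot.1 ((dvd_pow_self _ (Nat.succ_ne_zero _)).trans (h.2 i))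
  rwa [IsRoot, eval_sub, sub_eq_zero] at this

theorem mem_splineSpace_iff (hτ0 : τ 0 = 0) (hτ1 : τ (k + 1) = 1)
    (hτ : ∀ i ≤ k, τ i < τ (i + 1)) {g : Icc (0 : ℝ) 1 → ℝ} :
    g ∈ SplineSpace k τ d s ↔
      ∃ P, IsSplinePieces k τ d s P ∧
        ∀ x : Icc (0 : ℝ) 1, g x = (P (knotIndex k τ x)).eval x.1 := by
  constructor
  · rintro ⟨f, ⟨P, hdeg, hpiece, hsmooth⟩, hg⟩
    refine ⟨fun i => P i, ⟨fun i => hdeg i (Nat.lt_succ_iff.1 i.2), fun i => ?_⟩, fun x => ?_⟩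
    · exact X_sub_C_pow_dvd_sub_iff.2 (hsmooth (i + 1) (by omega) i.2)
    · rw [hg, hpiece _ (Nat.lt_succ_iff.1 (knotIndex k τ x).2) _ (mem_Icc_knotIndex hτ0 hτ1 x.2)]
  · rintro ⟨P, hP, hg⟩
    let Q : ℕ → ℝ[X] := fun n => if h : n < k + 1 then P ⟨n, h⟩ else 0
    have hQ : ∀ i : Fin (k + 1), Q i = P i := fun i => dif_pos i.2
    refine ⟨fun y => (P (knotIndex k τ y)).eval y, ⟨Q, fun i hi => ?_, fun i hi y hy => ?_,
      fun i hi1 hik j hj => ?_⟩, hg⟩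
    · rw [hQ ⟨i, by omega⟩]
      exact hP.1 _
    · rw [hQ ⟨i, by omega⟩]
      exact eval_knotIndex hτ hP.eval_castSucc_eq hy
    · obtain ⟨m, rfl⟩ : ∃ m, i = m + 1 := ⟨i - 1, by omega⟩
      have := X_sub_C_pow_dvd_sub_iff.1 (hP.2 ⟨m, by omega⟩) j hj
      rw [Nat.add_sub_cancel, hQ ⟨m, by omega⟩, hQ ⟨m + 1, by omega⟩]
      exact this

end Pieces

section Multiplication

variable {k : ℕ} {τ : ℕ → ℝ} {d e : ℕ} {s : ℕ → ℕ} {P : Fin (k + 1) → ℝ[X]}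

theorem IsSplinePieces.mul_left (h : IsSplinePieces k τ d s P) {q : ℝ[X]}
    (hde : q.natDegree + d ≤ e) : IsSplinePieces k τ e s fun i => q * P i :=
  ⟨fun i => natDegree_mul_le.trans (by have := h.1 i; omega),
    fun i => by simpa only [mul_sub] using (h.2 i).mul_left q⟩

theorem IsSplinePieces.of_mul_left {a : ℝ[X]} (ha0 : a ≠ 0)
    (ha : ∀ i : Fin k, a.eval (τ (i + 1)) ≠ 0) (h : IsSplinePieces k τ e s fun i => a * P i) :
    IsSplinePieces k τ (e - a.natDegree) s P :=
  ⟨fun i => natDegree_le_sub_of_natDegree_mul_le ha0 (h.1 i),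
    fun i => (isCoprime_X_sub_C_pow_of_eval_ne_zero (ha i) _).dvd_of_dvd_mul_left
      (by simpa only [mul_sub] using h.2 i)⟩

theorem pieces_eq_of_eval_knotIndex_eq (hτ0 : τ 0 = 0) (hτ1 : τ (k + 1) = 1)
    (hτ : ∀ i ≤ k, τ i < τ (i + 1)) {Q : Fin (k + 1) → ℝ[X]}
    (h : ∀ x : Icc (0 : ℝ) 1, (P (knotIndex k τ x)).eval x.1 = (Q (knotIndex k τ x)).eval x.1) :
    P = Q := by
  funext i
  refine eq_of_infinite_eval_eq _ _ ((Ioo_infinite (hτ i (by omega))).mono fun x hx => ?_)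
  have hx01 := Icc_knot_subset hτ0 hτ1 hτ i (Ioo_subset_Icc_self hx)
  show (P i).eval x = (Q i).eval x
  simpa only [knotIndex_eq_of_mem_Ioo hτ hx] using h ⟨x, hx01⟩

theorem mul_mem_splineSpace (hτ0 : τ 0 = 0) (hτ1 : τ (k + 1) = 1)
    (hτ : ∀ i ≤ k, τ i < τ (i + 1)) {g : Icc (0 : ℝ) 1 → ℝ} (hg : g ∈ SplineSpace k τ d s)
    {q : ℝ[X]} (hde : q.natDegree + d ≤ e) : (fun x => q.eval x.1 * g x) ∈ SplineSpace k τ e s := by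
  obtain ⟨P, hP, hgP⟩ := (mem_splineSpace_iff hτ0 hτ1 hτ).1 hg
  exact (mem_splineSpace_iff hτ0 hτ1 hτ).2 ⟨_, hP.mul_left hde, fun x => by simp [hgP]⟩

theorem mem_splineSpace_of_mul_mem (hτ0 : τ 0 = 0) (hτ1 : τ (k + 1) = 1)
    (hτ : ∀ i ≤ k, τ i < τ (i + 1)) {g : Icc (0 : ℝ) 1 → ℝ} {a b : ℝ[X]} (hab : IsCoprime a b)
    (ha : ∀ x ∈ Icc (0 : ℝ) 1, a.eval x ≠ 0) (hb : b ≠ 0)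
    (hag : (fun x => a.eval x.1 * g x) ∈ SplineSpace k τ e s)
    (hbg : (fun x => b.eval x.1 * g x) ∈ SplineSpace k τ e s) :
    g ∈ SplineSpace k τ (e - max a.natDegree b.natDegree) s := by
  have ha0 : a ≠ 0 := fun h => ha 0 (by simp) (by simp [h])
  obtain ⟨A, hA, hgA⟩ := (mem_splineSpace_iff hτ0 hτ1 hτ).1 hag
  obtain ⟨B, hB, hgB⟩ := (mem_splineSpace_iff hτ0 hτ1 hτ).1 hbg
  have hcross : (fun i => b * A i) = fun i => a * B i :=
    pieces_eq_of_eval_knotIndex_eq hτ0 hτ1 hτ fun x => by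
      simp only [eval_mul, ← hgA, ← hgB]
      ring
  choose Q hQ using fun i => hab.dvd_of_dvd_mul_left ⟨B i, congrFun hcross i⟩
  have hBQ : ∀ i, B i = b * Q i := fun i =>
    mul_left_cancel₀ ha0 (by rw [← congrFun hcross i, hQ]; ring)
  have hQa : IsSplinePieces k τ (e - a.natDegree) s Q :=
    .of_mul_left ha0 (fun i => ha _ (knot_mem_Icc hτ0 hτ1 hτ (by omega)))
      (by simpa only [← hQ] using hA)
  refine (mem_splineSpace_iff hτ0 hτ1 hτ).2 ⟨Q, ⟨fun i => ?_, hQa.2⟩, fun x => ?_⟩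
  · have := natDegree_le_sub_of_natDegree_mul_le hb (hBQ i ▸ hB.1 i)
    have := hQa.1 i
    omega
  · refine mul_left_cancel₀ (ha x x.2) ?_
    rw [hgA, hQ, eval_mul]

theorem setOf_sq_mul_mem_splineSpace_eq (hτ0 : τ 0 = 0) (hτ1 : τ (k + 1) = 1)
    (hτ : ∀ i ≤ k, τ i < τ (i + 1)) {a b : ℝ[X]} (hab : IsCoprime a b)
    (ha : ∀ x ∈ Icc (0 : ℝ) 1, a.eval x ≠ 0) (hb : b ≠ 0)
    (he : 2 * max a.natDegree b.natDegree ≤ e) :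
    {g : Icc (0 : ℝ) 1 → ℝ |
        (fun x : Icc (0 : ℝ) 1 => (a.eval x.1) ^ 2 * g x) ∈ SplineSpace k τ e s ∧
        (fun x : Icc (0 : ℝ) 1 => (b.eval x.1) ^ 2 * g x) ∈ SplineSpace k τ e s} =
      SplineSpace k τ (e - 2 * max a.natDegree b.natDegree) s := by
  ext g
  simp only [← eval_pow]
  constructor
  · rintro ⟨ha2, hb2⟩
    have := mem_splineSpace_of_mul_mem hτ0 hτ1 hτ hab.pow
      (fun x hx => by simpa using ha x hx) (pow_ne_zero 2 hb) ha2 hb2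
    rwa [natDegree_pow, natDegree_pow, Nat.mul_max_mul_left] at this
  · intro hg
    exact ⟨mul_mem_splineSpace hτ0 hτ1 hτ hg (by rw [natDegree_pow]; omega),
      mul_mem_splineSpace hτ0 hτ1 hτ hg (by rw [natDegree_pow]; omega)⟩

end Multiplication

section Dimension

variable {k : ℕ} {τ : ℕ → ℝ} {d : ℕ} {s : ℕ → ℕ}

def gluePieces (k : ℕ) (τ : ℕ → ℝ) (d : ℕ) :
    (Fin (k + 1) → degreeLT ℝ (d + 1)) →ₗ[ℝ] Icc (0 : ℝ) 1 → ℝ :=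
  LinearMap.pi fun x => leval x.1 ∘ₗ (degreeLT ℝ (d + 1)).subtype ∘ₗ
    LinearMap.proj (R := ℝ) (φ := fun _ => degreeLT ℝ (d + 1)) (knotIndex k τ x)

def knotJumpJets (k : ℕ) (τ : ℕ → ℝ) (d : ℕ) (s : ℕ → ℕ) :
    (Fin (k + 1) → degreeLT ℝ (d + 1)) →ₗ[ℝ] (i : Fin k) → Fin (s (i + 1) + 1) → ℝ :=
  LinearMap.pi fun i => jet (τ (i + 1)) (s (i + 1)) ∘ₗ (degreeLT ℝ (d + 1)).subtype ∘ₗ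
    (LinearMap.proj (R := ℝ) (φ := fun _ => degreeLT ℝ (d + 1)) i.castSucc -
      LinearMap.proj (R := ℝ) (φ := fun _ => degreeLT ℝ (d + 1)) i.succ)

theorem gluePieces_apply (F : Fin (k + 1) → degreeLT ℝ (d + 1)) (x : Icc (0 : ℝ) 1) :
    gluePieces k τ d F x = (F (knotIndex k τ x) : ℝ[X]).eval x.1 := rfl

theorem mem_ker_knotJumpJets_iff {F : Fin (k + 1) → degreeLT ℝ (d + 1)} :
    F ∈ LinearMap.ker (knotJumpJets k τ d s) ↔
      ∀ i : Fin k, (X - C (τ (i + 1))) ^ (s (i + 1) + 1) ∣ (F i.castSucc - F i.succ : ℝ[X]) := by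
  simp [knotJumpJets, funext_iff, ← jet_eq_zero_iff]

theorem splineSpace_eq_map_ker (hτ0 : τ 0 = 0) (hτ1 : τ (k + 1) = 1)
    (hτ : ∀ i ≤ k, τ i < τ (i + 1)) :
    SplineSpace k τ d s = (LinearMap.ker (knotJumpJets k τ d s)).map (gluePieces k τ d) := by
  ext g
  rw [mem_splineSpace_iff hτ0 hτ1 hτ, SetLike.mem_coe, Submodule.mem_map]
  constructor
  · rintro ⟨P, hP, hg⟩
    exact ⟨fun i => ⟨P i, mem_degreeLT_add_one_iff.2 (hP.1 i)⟩,
      mem_ker_knotJumpJets_iff.2 hP.2, funext fun x => (hg x).symm⟩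
  · rintro ⟨F, hF, rfl⟩
    exact ⟨fun i => F i,
      ⟨fun i => mem_degreeLT_add_one_iff.1 (F i).2, mem_ker_knotJumpJets_iff.1 hF⟩, fun _ => rfl⟩

theorem gluePieces_injective (hτ0 : τ 0 = 0) (hτ1 : τ (k + 1) = 1)
    (hτ : ∀ i ≤ k, τ i < τ (i + 1)) : Function.Injective (gluePieces k τ d) := by
  rw [← LinearMap.ker_eq_bot, LinearMap.ker_eq_bot']
  intro F hF
  have := pieces_eq_of_eval_knotIndex_eq hτ0 hτ1 hτ (P := fun i => (F i : ℝ[X])) (Q := 0)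
    fun x => by simpa [gluePieces_apply] using congrFun hF x
  funext i
  exact Subtype.ext (congrFun this i)

theorem knotJumpJets_surjective (hs : ∀ i : Fin k, s (i + 1) ≤ d) :
    Function.Surjective (knotJumpJets k τ d s) := by
  intro c
  choose q hq hjet using fun i : Fin k => exists_mem_degreeLT_jet_eq (t := τ (i + 1)) (c i)
  have hqd : ∀ i, q i ∈ degreeLT ℝ (d + 1) := fun i =>
    degreeLT_mono (by have := hs i; omega) (hq i)
  let F : Fin (k + 1) → degreeLT ℝ (d + 1) := fun m =>
    -∑ j with j.castSucc < m, ⟨q j, hqd j⟩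
  have hjump : ∀ i : Fin k, (F i.castSucc - F i.succ : ℝ[X]) = q i := by
    intro i
    simp [F, Finset.filter_gt_eq_Iio, Finset.filter_ge_eq_Iic, ← Finset.Iio_insert]
  refine ⟨F, funext fun i => ?_⟩
  simp [knotJumpJets, hjump, hjet]

theorem finrank_ker_knotJumpJets_add (hs : ∀ i : Fin k, s (i + 1) ≤ d) :
    Module.finrank ℝ (LinearMap.ker (knotJumpJets k τ d s)) + ∑ i : Fin k, (s (i + 1) + 1) =
      (k + 1) * (d + 1) := by
  have := LinearMap.finrank_range_add_finrank_ker (knotJumpJets k τ d s)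
  rw [LinearMap.range_eq_top.2 (knotJumpJets_surjective hs), finrank_top] at this
  simp only [Module.finrank_pi_fintype, Module.finrank_self, mul_one, Fintype.card_fin,
    Module.finrank_eq_card_basis (degreeLT.basis ℝ (d + 1)), Finset.sum_const, Finset.card_univ,
    smul_eq_mul] at this
  omega

theorem finrank_span_splineSpace_add (hτ0 : τ 0 = 0) (hτ1 : τ (k + 1) = 1)
    (hτ : ∀ i ≤ k, τ i < τ (i + 1)) (hs : ∀ i : Fin k, s (i + 1) ≤ d) :
    Module.finrank ℝ (Submodule.span ℝ (SplineSpace k τ d s)) + ∑ i : Fin k, (s (i + 1) + 1) =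
      (k + 1) * (d + 1) := by
  rw [splineSpace_eq_map_ker hτ0 hτ1 hτ, Submodule.span_eq,
    ← (Submodule.equivMapOfInjective _ (gluePieces_injective hτ0 hτ1 hτ) _).finrank_eq]
  exact finrank_ker_knotJumpJets_add hs

theorem finrank_span_splineSpace (hτ0 : τ 0 = 0) (hτ1 : τ (k + 1) = 1)
    (hτ : ∀ i ≤ k, τ i < τ (i + 1)) {r : ℕ} (hr : r ≤ d) :
    Module.finrank ℝ (Submodule.span ℝ (SplineSpace k τ d fun _ => r)) =
      k * (d - r) + (d + 1) := by
  have := finrank_span_splineSpace_add hτ0 hτ1 hτ (s := fun _ => r) fun _ => hr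
  simp only [Finset.sum_const, Finset.card_univ, Fintype.card_fin, smul_eq_mul] at this
  obtain ⟨e, rfl⟩ := Nat.exists_eq_add_of_le hr
  rw [Nat.add_sub_cancel_left]
  nlinarith

end Dimension

theorem stmt5_general (p r k : ℕ) (hrp : r + 3 ≤ p)
    (τ : ℕ → ℝ) (hτ0 : τ 0 = 0) (hτ1 : τ (k+1) = 1)
    (hτ : ∀ i ≤ k, τ i < τ (i+1))
    (αtL αtR : Polynomial ℝ) (hcop : IsCoprime αtL αtR)
    (hdL : αtL.natDegree ≤ 1) (hdR : αtR.natDegree ≤ 1)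
    (hneL : ∀ v ∈ Set.Icc (0:ℝ) 1, αtL.eval v ≠ 0)
    (hneR : ∀ v ∈ Set.Icc (0:ℝ) 1, αtR.eval v ≠ 0) :
    {g : Set.Icc (0:ℝ) 1 → ℝ |
        (fun x : Set.Icc (0:ℝ) 1 => (αtL.eval x.1) ^ 2 * g x) ∈
          SplineSpace k τ p (fun _ => r) ∧
        (fun x : Set.Icc (0:ℝ) 1 => (αtR.eval x.1) ^ 2 * g x) ∈
          SplineSpace k τ p (fun _ => r)} =
      SplineSpace k τ (p - 2 * max αtL.natDegree αtR.natDegree) (fun _ => r) ∧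
    Module.finrank ℝ (Submodule.span ℝ
      {g : Set.Icc (0:ℝ) 1 → ℝ |
        (fun x : Set.Icc (0:ℝ) 1 => (αtL.eval x.1) ^ 2 * g x) ∈
          SplineSpace k τ p (fun _ => r) ∧
        (fun x : Set.Icc (0:ℝ) 1 => (αtR.eval x.1) ^ 2 * g x) ∈
          SplineSpace k τ p (fun _ => r)}) =
      k * (p - 2 * max αtL.natDegree αtR.natDegree - r) +
        (p + 1 - 2 * max αtL.natDegree αtR.natDegree) := by
  have hΓ := setOf_sq_mul_mem_splineSpace_eq (e := p) (s := fun _ => r) hτ0 hτ1 hτ hcop hneL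
    (fun h => hneR 0 (by simp) (by simp [h])) (by omega)
  refine ⟨hΓ, ?_⟩
  rw [hΓ, finrank_span_splineSpace hτ0 hτ1 hτ (by omega)]
  omega

/-- the space Γ₂ and its dimension. -/
theorem stmt5 (p r k : ℕ) (hp : 5 ≤ p) (hr2 : 2 ≤ r) (hrp : r + 3 ≤ p)
    (τ : ℕ → ℝ) (hτ0 : τ 0 = 0) (hτ1 : τ (k+1) = 1)
    (hτ : ∀ i ≤ k, τ i < τ (i+1))
    (αtL αtR : Polynomial ℝ) (hcop : IsCoprime αtL αtR)
    (hdL : αtL.natDegree ≤ 1) (hdR : αtR.natDegree ≤ 1)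
    (hneL : ∀ v ∈ Set.Icc (0:ℝ) 1, αtL.eval v ≠ 0)
    (hneR : ∀ v ∈ Set.Icc (0:ℝ) 1, αtR.eval v ≠ 0) :
    {g : Set.Icc (0:ℝ) 1 → ℝ |
        (fun x : Set.Icc (0:ℝ) 1 => (αtL.eval x.1) ^ 2 * g x) ∈
          SplineSpace k τ p (fun _ => r) ∧
        (fun x : Set.Icc (0:ℝ) 1 => (αtR.eval x.1) ^ 2 * g x) ∈
          SplineSpace k τ p (fun _ => r)} =
      SplineSpace k τ (p - 2 * max αtL.natDegree αtR.natDegree) (fun _ => r) ∧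
    Module.finrank ℝ (Submodule.span ℝ
      {g : Set.Icc (0:ℝ) 1 → ℝ |
        (fun x : Set.Icc (0:ℝ) 1 => (αtL.eval x.1) ^ 2 * g x) ∈
          SplineSpace k τ p (fun _ => r) ∧
        (fun x : Set.Icc (0:ℝ) 1 => (αtR.eval x.1) ^ 2 * g x) ∈
          SplineSpace k τ p (fun _ => r)}) =
      k * (p - 2 * max αtL.natDegree αtR.natDegree - r) +
        (p + 1 - 2 * max αtL.natDegree αtR.natDegree) :=
  stmt5_general p r k hrp τ hτ0 hτ1 hτ αtL αtR hcop hdL hdR hneL hneR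
end
end
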